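/- Comparison with the Balazs–Voros quantization: for 0 ≤ n, m < N, if n is even then 𝖡_{nm} = 𝖡𝖵_{nm}, while if n is odd then 𝖡_{nm} = e^{iπζ/N} · 𝖡𝖵_{nm}, where ζ = n − 2m when 0 ≤ m < N/2 and ζ = n − 2(m − N/2) when N/2 ≤ m < N. -/

import Mathlib

noncomputable section

noncomputable section

/-- Entry of the `M × M` discrete Fourier transform matrix: `M^{-1/2} e^{-2πiab/M}`. -/
def dftEntry (M a b : ℕ) : ℂ :=
  ((Real.sqrt M : ℝ) : ℂ)⁻¹ * Complex.exp (-(2 * Real.pi * Complex.I * a * b) / M)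

/-- The `N × N` discrete Fourier transform matrix `(𝓕^N)_{mn} = N^{-1/2} e^{-2πimn/N}`. -/
def dftMatrix (N : ℕ) : Matrix (Fin N) (Fin N) ℂ :=
  Matrix.of fun m n : Fin N => dftEntry N m n

/-- The diagonal phase matrix `Z` with `Z_{nn} = e^{iπn/N}`. -/
def Zmat (N : ℕ) : Matrix (Fin N) (Fin N) ℂ :=
  Matrix.diagonal fun n : Fin N => Complex.exp (Real.pi * Complex.I * (n : ℕ) / N)

/-- The block-diagonal matrix `D` with upper-left block `𝓕^{N/2}` and lower-right block
`−𝓕^{N/2}`. -/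
def Dmat (N : ℕ) : Matrix (Fin N) (Fin N) ℂ :=
  Matrix.of fun m n : Fin N =>
    if (m : ℕ) < N / 2 ∧ (n : ℕ) < N / 2 then dftEntry (N / 2) m n
    else if N / 2 ≤ (m : ℕ) ∧ N / 2 ≤ (n : ℕ) then
      -dftEntry (N / 2) ((m : ℕ) - N / 2) ((n : ℕ) - N / 2)
    else 0

/-- The quantum baker matrix `𝖡 = Z (𝓕^N)⁻¹ D Z⁻²`. -/
def bakerMatrix (N : ℕ) : Matrix (Fin N) (Fin N) ℂ :=
  Zmat N * (dftMatrix N)⁻¹ * Dmat N * (Zmat N ^ 2)⁻¹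

/-- The block-diagonal matrix `D₊` with both diagonal blocks equal to `𝓕^{N/2}`. -/
def DplusMat (N : ℕ) : Matrix (Fin N) (Fin N) ℂ :=
  Matrix.of fun m n : Fin N =>
    if (m : ℕ) < N / 2 ∧ (n : ℕ) < N / 2 then dftEntry (N / 2) m n
    else if N / 2 ≤ (m : ℕ) ∧ N / 2 ≤ (n : ℕ) then
      dftEntry (N / 2) ((m : ℕ) - N / 2) ((n : ℕ) - N / 2)
    else 0

/-- The Balazs–Voros matrix `𝖡𝖵 = (𝓕^N)⁻¹ D₊`. -/
def balazsVorosMatrix (N : ℕ) : Matrix (Fin N) (Fin N) ℂ :=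
  (dftMatrix N)⁻¹ * DplusMat N

/-! Since `D = D₊ · diag(±1)` (the sign being `-1` on the second block column), every entry
satisfies `𝖡ₙₘ = e^{iπn/N} · (±1) · e^{-2πim/N} · 𝖡𝖵ₙₘ = e^{iπζ/N} · 𝖡𝖵ₙₘ`, which is the odd case.
For an even row `n = 2j`, row `n` of `(𝓕^N)⁻¹` is `N/2`-periodic, so `𝖡𝖵ₙₘ` is a multiple of the
character sum `∑_{k < N/2} e^{2πi (j - m mod N/2) k / (N/2)}`, which vanishes unless
`ζ = 2 (j - m mod N/2)` is zero. -/

open Complex Finset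
open scoped Real

theorem sum_range_exp_two_pi_I_mul_div (M : ℕ) (t : ℤ) :
    ∑ k ∈ range M, exp (2 * π * I * t * k / M) = if (M : ℤ) ∣ t then (M : ℂ) else 0 := by
  rcases eq_or_ne M 0 with rfl | hM
  · simp
  have hω := isPrimitiveRoot_exp M hM
  have hterm (k : ℕ) : exp (2 * π * I * t * k / M) = (exp (2 * π * I / M) ^ t) ^ k := by
    rw [← exp_int_mul, ← exp_nat_mul]
    ring_nf
  simp_rw [hterm]
  set z := exp (2 * π * I / M) ^ t
  split_ifs with hdvd
  · simp [z, (hω.zpow_eq_one_iff_dvd t).2 hdvd]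
  · have hz : z ≠ 1 := fun h ↦ hdvd ((hω.zpow_eq_one_iff_dvd t).1 h)
    have hzM : z ^ M = 1 := by
      rw [← zpow_natCast, ← zpow_mul, mul_comm t, zpow_mul, zpow_natCast, hω.pow_eq_one,
        one_zpow]
    rw [geom_sum_eq hz, hzM, sub_self, zero_div]

open Matrix

theorem dftMatrix_inv (N : ℕ) :
    (dftMatrix N)⁻¹ = of fun a b : Fin N => ((√N : ℝ) : ℂ)⁻¹ * exp (2 * π * I * a * b / N) := by
  refine inv_eq_right_inv (ext fun a b ↦ ?_)
  have hsqrt : ((√N : ℝ) : ℂ)⁻¹ * ((√N : ℝ) : ℂ)⁻¹ = (N : ℂ)⁻¹ := by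
    rw [← mul_inv, ← ofReal_mul, Real.mul_self_sqrt N.cast_nonneg, ofReal_natCast]
  have hterm (k : Fin N) : dftMatrix N a k * (((√N : ℝ) : ℂ)⁻¹ * exp (2 * π * I * k * b / N)) =
      (N : ℂ)⁻¹ * exp (2 * π * I * ((b - a : ℤ) : ℂ) * (k : ℕ) / N) := by
    rw [dftMatrix, of_apply, dftEntry, mul_mul_mul_comm, hsqrt, ← exp_add]
    push_cast
    ring_nf
  have hdvd : (N : ℤ) ∣ (b - a : ℤ) ↔ a = b := by
    refine ⟨fun h ↦ Fin.ext ?_, fun h ↦ by simp [h]⟩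
    have := Int.eq_zero_of_abs_lt_dvd h (by rw [abs_lt]; omega)
    omega
  simp only [mul_apply, of_apply, hterm, ← mul_sum, one_apply]
  rw [Fin.sum_univ_eq_sum_range (fun k ↦ exp (2 * π * I * ((b - a : ℤ) : ℂ) * k / N)),
    sum_range_exp_two_pi_I_mul_div]
  simp only [hdvd]
  split_ifs
  · exact inv_mul_cancel₀ (Nat.cast_ne_zero.2 (Fin.pos a).ne')
  · exact mul_zero _

theorem Dmat_eq_DplusMat_mul_diagonal (N : ℕ) :
    Dmat N = DplusMat N * diagonal fun m : Fin N ↦ if (m : ℕ) < N / 2 then 1 else -1 := by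
  ext k m
  simp only [Dmat, DplusMat, mul_diagonal, of_apply]
  split_ifs <;> first | omega | simp

theorem inv_Zmat_sq (N : ℕ) :
    (Zmat N ^ 2)⁻¹ = diagonal fun k : Fin N ↦ exp (-(2 * π * I * (k : ℕ)) / N) := by
  refine inv_eq_right_inv ?_
  rw [Zmat, diagonal_pow, diagonal_mul_diagonal, ← diagonal_one]
  congr 1
  funext k
  rw [Pi.pow_apply, ← exp_nat_mul, ← exp_add, ← exp_zero]
  ring_nf

theorem bakerMatrix_apply_eq_mul_balazsVorosMatrix (N : ℕ) (n m : Fin N) :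
    bakerMatrix N n m = exp (π * I * (n : ℕ) / N) * balazsVorosMatrix N n m *
      ((if (m : ℕ) < N / 2 then 1 else -1) * exp (-(2 * π * I * (m : ℕ)) / N)) := by
  rw [bakerMatrix, Dmat_eq_DplusMat_mul_diagonal, inv_Zmat_sq,
    show ∀ A B C D E : Matrix (Fin N) (Fin N) ℂ, A * B * (C * D) * E = A * (B * C) * (D * E) by
      intros; simp only [Matrix.mul_assoc],
    diagonal_mul_diagonal, Zmat, mul_diagonal, diagonal_mul, balazsVorosMatrix]

/-- The exponent `ζ` of the paper. -/
def bakerPhaseExponent (N : ℕ) (n m : Fin N) : ℤ :=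
  if (m : ℕ) < N / 2 then (n : ℤ) - 2 * (m : ℕ) else (n : ℤ) - 2 * ((m : ℕ) - (N / 2 : ℕ))

theorem exp_mul_sign_mul_exp_eq_exp_bakerPhaseExponent {N : ℕ} (hN : Even N) (n m : Fin N) :
    exp (π * I * (n : ℕ) / N) *
        ((if (m : ℕ) < N / 2 then 1 else -1) * exp (-(2 * π * I * (m : ℕ)) / N)) =
      exp (π * I * bakerPhaseExponent N n m / N) := by
  obtain ⟨M, rfl⟩ := hN
  have hM : (M : ℂ) ≠ 0 := Nat.cast_ne_zero.2 (by have := Fin.pos m; omega)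
  rw [bakerPhaseExponent, show (M + M) / 2 = M by omega]
  split_ifs
  · rw [one_mul, ← exp_add]
    push_cast
    ring_nf
  · rw [← exp_pi_mul_I, ← exp_add, ← exp_add]
    congr 1
    push_cast
    field_simp
    ring

theorem bakerMatrix_apply {N : ℕ} (hN : Even N) (n m : Fin N) :
    bakerMatrix N n m = exp (π * I * bakerPhaseExponent N n m / N) * balazsVorosMatrix N n m := by
  rw [bakerMatrix_apply_eq_mul_balazsVorosMatrix, mul_right_comm,
    exp_mul_sign_mul_exp_eq_exp_bakerPhaseExponent hN]

theorem DplusMat_castAdd_add_natAdd (M : ℕ) (i : Fin M) (m : Fin (M + M)) :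
    DplusMat (M + M) (Fin.castAdd M i) m + DplusMat (M + M) (Fin.natAdd M i) m =
      dftEntry M i ((m : ℕ) % M) := by
  simp only [DplusMat, of_apply, Fin.val_castAdd, Fin.val_natAdd, show (M + M) / 2 = M by omega,
    Nat.add_sub_cancel_left]
  by_cases hm : (m : ℕ) < M
  · simp [hm, Nat.mod_eq_of_lt]
  · rw [Nat.mod_eq_sub_mod (not_lt.1 hm), Nat.mod_eq_of_lt (by omega)]
    simp [hm, i.isLt.not_ge]

theorem balazsVorosMatrix_add_self_even_row_apply (M j : ℕ) (n m : Fin (M + M))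
    (hn : (n : ℕ) = j + j) :
    balazsVorosMatrix (M + M) n m = ((√((M + M : ℕ) : ℝ) : ℝ) : ℂ)⁻¹ *
      ∑ i : Fin M, exp (2 * π * I * j * (i : ℕ) / M) * dftEntry M i ((m : ℕ) % M) := by
  have hM : (M : ℂ) ≠ 0 := Nat.cast_ne_zero.2 (by have := Fin.pos m; omega)
  have hrow (k : Fin (M + M)) : (dftMatrix (M + M))⁻¹ n k =
      ((√((M + M : ℕ) : ℝ) : ℝ) : ℂ)⁻¹ * exp (2 * π * I * j * (k : ℕ) / M) := by
    rw [dftMatrix_inv, of_apply, hn]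
    push_cast
    field_simp
  have hperiodic (i : ℕ) :
      exp (2 * π * I * j * ((M + i : ℕ) : ℂ) / M) = exp (2 * π * I * j * i / M) := by
    rw [← mul_one (exp (2 * π * I * j * i / M)), ← exp_nat_mul_two_pi_mul_I j, ← exp_add]
    congr 1
    push_cast
    field_simp
    ring
  rw [balazsVorosMatrix, mul_apply, Fin.sum_univ_add, ← sum_add_distrib, mul_sum]
  refine sum_congr rfl fun i _ ↦ ?_
  rw [hrow, hrow, Fin.val_castAdd, Fin.val_natAdd, hperiodic, ← DplusMat_castAdd_add_natAdd]
  ring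

theorem bakerPhaseExponent_add_self (M : ℕ) (n m : Fin (M + M)) :
    bakerPhaseExponent (M + M) n m = (n : ℤ) - 2 * ((m : ℕ) % M : ℕ) := by
  rw [bakerPhaseExponent, show (M + M) / 2 = M by omega]
  split_ifs with hm
  · rw [Nat.mod_eq_of_lt hm]
  · rw [Nat.mod_eq_sub_mod (not_lt.1 hm), Nat.mod_eq_of_lt (by omega)]
    omega

theorem balazsVorosMatrix_eq_zero_of_even {N : ℕ} (hN : Even N) (n m : Fin N)
    (hn : Even (n : ℕ)) (hζ : bakerPhaseExponent N n m ≠ 0) : balazsVorosMatrix N n m = 0 := by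
  obtain ⟨M, rfl⟩ := hN
  obtain ⟨j, hj⟩ := hn
  rw [balazsVorosMatrix_add_self_even_row_apply M j n m hj]
  set r := (m : ℕ) % M
  have hdvd : ¬ (M : ℤ) ∣ (j - r : ℤ) := by
    have hr : r < M := Nat.mod_lt _ (by have := Fin.pos m; omega)
    rw [bakerPhaseExponent_add_self, hj] at hζ
    exact fun h ↦ hζ (by have := Int.eq_zero_of_abs_lt_dvd h (by rw [abs_lt]; omega); omega)
  have hterm (i : Fin M) : exp (2 * π * I * j * (i : ℕ) / M) * dftEntry M i r =
      ((√(M : ℝ) : ℝ) : ℂ)⁻¹ * exp (2 * π * I * ((j - r : ℤ) : ℂ) * (i : ℕ) / M) := by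
    rw [dftEntry, mul_left_comm, ← exp_add]
    push_cast
    ring_nf
  simp only [hterm, ← mul_sum]
  rw [Fin.sum_univ_eq_sum_range (fun i ↦ exp (2 * π * I * ((j - r : ℤ) : ℂ) * i / M)),
    sum_range_exp_two_pi_I_mul_div, if_neg hdvd, mul_zero, mul_zero]

theorem bakerMatrix_eq_balazsVoros_upto_phase_general (N : ℕ) (hNeven : Even N)
    (n m : Fin N) :
    (Even (n : ℕ) → bakerMatrix N n m = balazsVorosMatrix N n m) ∧
      (Odd (n : ℕ) →
        bakerMatrix N n m =
          Complex.exp (Real.pi * Complex.I *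
              (((if (m : ℕ) < N / 2 then (n : ℤ) - 2 * (m : ℕ)
                 else (n : ℤ) - 2 * ((m : ℕ) - (N / 2 : ℕ))) : ℤ) : ℂ) / N) *
            balazsVorosMatrix N n m) := by
  have hbaker := bakerMatrix_apply hNeven n m
  refine ⟨fun hn ↦ ?_, fun _ ↦ hbaker⟩
  by_cases hζ : bakerPhaseExponent N n m = 0
  · rw [hbaker, hζ, Int.cast_zero, mul_zero, zero_div, exp_zero, one_mul]
  · rw [hbaker, balazsVorosMatrix_eq_zero_of_even hNeven n m hn hζ, mul_zero]

/-- Comparison with the Balazs–Voros quantization: even rows agree, while odd rows differ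
by the phase `e^{iπζ/N}`, where `ζ = n − 2m` for `0 ≤ m < N/2` and `ζ = n − 2(m − N/2)`
for `N/2 ≤ m < N`. -/
theorem bakerMatrix_eq_balazsVoros_upto_phase (N : ℕ) (hN : 0 < N) (hNeven : Even N)
    (n m : Fin N) :
    (Even (n : ℕ) → bakerMatrix N n m = balazsVorosMatrix N n m) ∧
      (Odd (n : ℕ) →
        bakerMatrix N n m =
          Complex.exp (Real.pi * Complex.I *
              (((if (m : ℕ) < N / 2 then (n : ℤ) - 2 * (m : ℕ)
                 else (n : ℤ) - 2 * ((m : ℕ) - (N / 2 : ℕ))) : ℤ) : ℂ) / N) *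
            balazsVorosMatrix N n m) :=
  bakerMatrix_eq_balazsVoros_upto_phase_general N hNeven n m

end
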